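/- Let Γ be a finite set of at most n complex numbers where every element is (N,ρ)-linked to some element of Γ, and let E ⊆ Γ be a chain-linked equivalence class containing no (N,ρ)-loop of odd length. Then E admits a partition E = Σ₁ ∪ Σ₂ such that: (i) no two elements of Σ₁ are (N,ρ)-linked, and no two elements of Σ₂ are (N,ρ)-linked; (ii) for any β, γ both in Σ₁ (or both in Σ₂), β and γ̄ are (nN, nρ)-linked; (iii) for β ∈ Σ₁ and γ ∈ Σ₂, β and γ are (nN, nρ)-linked. -/

import Mathlib

open Complex

/-- `α` and `β` are `(N,ρ)`-linked: `|2πi⟨k,ω⟩ - (α - β̄)| < ρ` for some `|k| ≤ N`. -/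
def NLinked {d : ℕ} (ω : Fin d → ℝ) (N : ℕ) (ρ : ℝ) (α β : ℂ) : Prop :=
  ∃ k : Fin d → ℤ, (∑ i, |k i| : ℤ) ≤ (N : ℤ) ∧
    ‖(2 * Real.pi * Complex.I * (∑ i, (k i : ℝ) * ω i)
      - (α - (starRingEnd ℂ) β))‖ < ρ

/-- An `(N,ρ)`-chain in a set `S`: a nonempty list of elements of `S` with consecutive
elements `(N,ρ)`-linked. -/
def NChainIn {d : ℕ} (ω : Fin d → ℝ) (N : ℕ) (ρ : ℝ) (S : Finset ℂ) (c : List ℂ) : Prop :=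
  c ≠ [] ∧ (∀ x ∈ c, x ∈ S) ∧ c.Chain' (NLinked ω N ρ)

/-- `α` and `β` are `(N,ρ)`-chain-linked in `S`. -/
def NChainLinked {d : ℕ} (ω : Fin d → ℝ) (N : ℕ) (ρ : ℝ) (S : Finset ℂ) (α β : ℂ) : Prop :=
  ∃ c : List ℂ, NChainIn ω N ρ S c ∧ c.head? = some α ∧ c.getLast? = some β

/-!
Linking `α` to `β` and `β` to `γ` links `α` to `γ̄`, with the bounds added, because
`conj (2πi⟨k,ω⟩) = -2πi⟨k,ω⟩`. Hence a walk of `m` links from `u` to `v` makes `u` and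
`conj^[m+1] v` `(mN, (m+1)ρ)`-linked. Since `E` has no odd loop, the graph of `(N,ρ)`-links
on `E` is bipartite; `Σ₁, Σ₂` are its two colour classes. Any two elements of the
chain-linked class `E` are joined by a path of fewer than `n` links, whose parity is fixed by
the colours of its ends.
-/

open SimpleGraph

variable {d : ℕ} {ω : Fin d → ℝ} {N N' : ℕ} {ρ ρ' : ℝ} {α β γ : ℂ}

theorem NLinked.symm (h : NLinked ω N ρ α β) : NLinked ω N ρ β α := by
  obtain ⟨k, hk, hlt⟩ := h
  refine ⟨k, hk, ?_⟩
  have key : 2 * Real.pi * I * ((∑ i, (k i : ℝ) * ω i : ℝ) : ℂ) - (β - (starRingEnd ℂ) α)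
      = -(starRingEnd ℂ) (2 * Real.pi * I * ((∑ i, (k i : ℝ) * ω i : ℝ) : ℂ)
        - (α - (starRingEnd ℂ) β)) := by
    simp only [map_sub, map_mul, conj_ofReal, conj_I, map_ofNat, conj_conj]
    ring
  rwa [key, norm_neg, norm_conj]

theorem NLinked.mono (h : NLinked ω N ρ α β) (hN : N ≤ N') (hρ : ρ ≤ ρ') :
    NLinked ω N' ρ' α β := by
  obtain ⟨k, hk, hlt⟩ := h
  exact ⟨k, hk.trans (by exact_mod_cast hN), hlt.trans_le hρ⟩

theorem nlinked_conj_self (hρ : 0 < ρ) (α : ℂ) : NLinked ω N ρ α ((starRingEnd ℂ) α) :=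
  ⟨0, by simp, by simpa using hρ⟩

theorem NLinked.conj_trans (h₁ : NLinked ω N ρ α β) (h₂ : NLinked ω N' ρ' β γ) :
    NLinked ω (N + N') (ρ + ρ') α ((starRingEnd ℂ) γ) := by
  obtain ⟨k, hk, hlt⟩ := h₁
  obtain ⟨k', hk', hlt'⟩ := h₂
  refine ⟨k - k', ?_, ?_⟩
  · calc ∑ i, |(k - k') i| ≤ ∑ i, (|k i| + |k' i|) :=
          Finset.sum_le_sum fun i _ => abs_sub (k i) (k' i)
      _ ≤ N + N' := by rw [Finset.sum_add_distrib]; omega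
  · set x : ℂ := ((∑ i, (k i : ℝ) * ω i : ℝ) : ℂ)
    set x' : ℂ := ((∑ i, (k' i : ℝ) * ω i : ℝ) : ℂ)
    have hsum : ((∑ i, ((k - k') i : ℝ) * ω i : ℝ) : ℂ) = x - x' := by
      simp only [x, x', Pi.sub_apply, Int.cast_sub, sub_mul, Finset.sum_sub_distrib]
      push_cast
      rfl
    have key : 2 * Real.pi * I * ((∑ i, ((k - k') i : ℝ) * ω i : ℝ) : ℂ)
          - (α - (starRingEnd ℂ) ((starRingEnd ℂ) γ))
        = (2 * Real.pi * I * x - (α - (starRingEnd ℂ) β))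
          + (starRingEnd ℂ) (2 * Real.pi * I * x' - (β - (starRingEnd ℂ) γ)) := by
      simp only [hsum, map_sub, map_mul, conj_ofReal, conj_I, map_ofNat, conj_conj, x']
      ring
    rw [key]
    calc _ ≤ _ := norm_add_le _ _
      _ < ρ + ρ' := by rw [norm_conj]; exact add_lt_add hlt hlt'

theorem Complex.conj_involutive : Function.Involutive (starRingEnd ℂ) := conj_conj

theorem nchainLinked_iff_reflTransGen {S : Finset ℂ} :
    NChainLinked ω N ρ S α β ↔
      α ∈ S ∧ Relation.ReflTransGen (fun x y => y ∈ S ∧ NLinked ω N ρ x y) α β := by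
  constructor
  · rintro ⟨_ | ⟨a, l⟩, ⟨hne, hmem, hchain⟩, hhead, hlast⟩
    · exact absurd rfl hne
    obtain rfl : a = α := by simpa using hhead
    refine ⟨hmem _ List.mem_cons_self, List.relationReflTransGen_of_exists_isChain_cons l
      (hchain.imp_of_mem_imp fun x y _ hy hxy => ⟨hmem y hy, hxy⟩) ?_⟩
    rw [List.getLast?_eq_some_getLast (List.cons_ne_nil a l)] at hlast
    exact Option.some_injective _ hlast
  · rintro ⟨hα, h⟩
    obtain ⟨l, hchain, hlast⟩ := List.exists_isChain_cons_of_relationReflTransGen h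
    have hmem : ∀ x ∈ α :: l, x ∈ S :=
      hchain.induction (· ∈ S) _ (fun _ _ hxy _ => hxy.1) fun _ => hα
    refine ⟨α :: l, ⟨List.cons_ne_nil α l, hmem, hchain.imp fun _ _ => And.right⟩, rfl, ?_⟩
    rw [List.getLast?_eq_some_getLast (List.cons_ne_nil α l), hlast]

def HasOddLoop (ω : Fin d → ℝ) (N : ℕ) (ρ : ℝ) (S : Finset ℂ) : Prop :=
  ∃ c : List ℂ, NChainIn ω N ρ S c ∧ c.head? = c.getLast? ∧ 2 ≤ c.length ∧ Odd (c.length - 1)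

def linkGraph (ω : Fin d → ℝ) (N : ℕ) (ρ : ℝ) (S : Finset ℂ) : SimpleGraph ℂ where
  Adj x y := x ≠ y ∧ x ∈ S ∧ y ∈ S ∧ NLinked ω N ρ x y
  symm := ⟨fun _ _ h => ⟨h.1.symm, h.2.2.1, h.2.1, h.2.2.2.symm⟩⟩
  loopless := ⟨fun _ h => h.1 rfl⟩

theorem linkGraph_adj {S : Finset ℂ} {x y : ℂ} :
    (linkGraph ω N ρ S).Adj x y ↔ x ≠ y ∧ x ∈ S ∧ y ∈ S ∧ NLinked ω N ρ x y :=
  Iff.rfl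

namespace linkGraph

variable {S : Finset ℂ}

theorem mem_of_mem_support {u v : ℂ} (p : (linkGraph ω N ρ S).Walk u v) (hu : u ∈ S) :
    ∀ x ∈ p.support, x ∈ S := by
  induction p with
  | nil => simpa using hu
  | cons h _ ih =>
    simp only [Walk.support_cons, List.mem_cons, forall_eq_or_imp]
    exact ⟨hu, ih (linkGraph_adj.1 h).2.2.1⟩

theorem not_nlinked_self (hS : ¬ HasOddLoop ω N ρ S) (hβ : β ∈ S) : ¬ NLinked ω N ρ β β :=
  fun h => hS ⟨[β, β], ⟨by simp, by simpa using hβ, List.isChain_pair.2 h⟩, rfl, le_rfl,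
    odd_one⟩

theorem nonempty_coloring_bool (hS : ¬ HasOddLoop ω N ρ S) :
    Nonempty ((linkGraph ω N ρ S).Coloring Bool) := by
  obtain ⟨c⟩ := two_colorable_iff_forall_loop_even.2 fun u p => by
    by_contra hodd
    cases p with
    | nil => exact hodd (by simp)
    | cons h q =>
      let w := Walk.cons h q
      refine hS ⟨w.support, ⟨w.support_ne_nil, mem_of_mem_support w (linkGraph_adj.1 h).2.1,
        w.isChain_adj_support.imp fun _ _ hxy => (linkGraph_adj.1 hxy).2.2.2⟩, ?_, ?_, ?_⟩
      · rw [List.head?_eq_some_head w.support_ne_nil,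
          List.getLast?_eq_some_getLast w.support_ne_nil, w.head_support, w.getLast_support]
      · simp [w]
      · simpa [w, Walk.length_support] using Nat.not_even_iff_odd.1 hodd
  exact ⟨recolorOfEquiv _ finTwoEquiv c⟩

theorem _root_.SimpleGraph.Walk.nlinked_iterate_conj (hρ : 0 < ρ) {u v : ℂ}
    (p : (linkGraph ω N ρ S).Walk u v) :
    NLinked ω (p.length * N) ((p.length + 1) * ρ) u ((starRingEnd ℂ)^[p.length + 1] v) := by
  induction p with
  | nil => simpa using nlinked_conj_self hρ _
  | cons h p ih =>
    have := (linkGraph_adj.1 h).2.2.2.conj_trans ih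
    rw [← Function.iterate_succ_apply' (starRingEnd ℂ)] at this
    refine this.mono (le_of_eq ?_) (le_of_eq ?_) <;>
      simp only [Walk.length_cons] <;> push_cast <;> ring

theorem _root_.SimpleGraph.Reachable.exists_nlinked_iterate_conj {n : ℕ} (hρ : 0 < ρ)
    (hβ : β ∈ S) (hn : S.card ≤ n) (h : (linkGraph ω N ρ S).Reachable β γ) :
    ∃ p : (linkGraph ω N ρ S).Walk β γ,
      NLinked ω (n * N) (n * ρ) β ((starRingEnd ℂ)^[p.length + 1] γ) := by
  classical
  obtain ⟨p, hp⟩ := h.exists_isPath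
  have hlt : p.length < n := by
    have hcard := List.toFinset_card_of_nodup hp.support_nodup
    have hsub := Finset.card_le_card (s := p.support.toFinset) fun x hx =>
      mem_of_mem_support p hβ x (List.mem_toFinset.1 hx)
    rw [Walk.length_support] at hcard
    omega
  refine ⟨p, (p.nlinked_iterate_conj hρ).mono (by gcongr) ?_⟩
  gcongr
  exact_mod_cast hlt

variable (c : (linkGraph ω N ρ S).Coloring Bool)

theorem not_nlinked_of_color_eq (hS : ¬ HasOddLoop ω N ρ S) (hβ : β ∈ S) (hγ : γ ∈ S)
    (hc : c β = c γ) : ¬ NLinked ω N ρ β γ := by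
  intro h
  by_cases hβγ : β = γ
  · subst hβγ
    exact not_nlinked_self hS hβ h
  · exact c.valid (linkGraph_adj.2 ⟨hβγ, hβ, hγ, h⟩) hc

theorem nlinked_conj_of_color_eq {n : ℕ} (hρ : 0 < ρ) (hβ : β ∈ S) (hn : S.card ≤ n)
    (h : (linkGraph ω N ρ S).Reachable β γ) (hc : c β = c γ) :
    NLinked ω (n * N) (n * ρ) β ((starRingEnd ℂ) γ) := by
  obtain ⟨p, hp⟩ := h.exists_nlinked_iterate_conj hρ hβ hn
  have heven : Even p.length := (c.even_length_iff_congr p).2 (by rw [hc])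
  rwa [conj_involutive.iterate_odd heven.add_one] at hp

theorem nlinked_of_color_ne {n : ℕ} (hρ : 0 < ρ) (hβ : β ∈ S) (hn : S.card ≤ n)
    (h : (linkGraph ω N ρ S).Reachable β γ) (hc : c β ≠ c γ) :
    NLinked ω (n * N) (n * ρ) β γ := by
  obtain ⟨p, hp⟩ := h.exists_nlinked_iterate_conj hρ hβ hn
  have hodd : Odd p.length := (c.odd_length_iff_not_congr p).2 (by grind)
  rwa [conj_involutive.iterate_even hodd.add_one] at hp

end linkGraph

theorem reachable_of_mem_chainClass {Γ E : Finset ℂ} {α₀ : ℂ}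
    (hE : ∀ β, β ∈ E ↔ β ∈ Γ ∧ NChainLinked ω N ρ Γ α₀ β) (hβ : β ∈ E) :
    (linkGraph ω N ρ E).Reachable α₀ β := by
  obtain ⟨hα₀, hchain⟩ := nchainLinked_iff_reflTransGen.1 ((hE β).1 hβ).2
  suffices ∀ γ, Relation.ReflTransGen (fun x y => y ∈ Γ ∧ NLinked ω N ρ x y) α₀ γ →
      γ ∈ E ∧ (linkGraph ω N ρ E).Reachable α₀ γ from (this β hchain).2
  intro γ hγ
  induction hγ with
  | refl => exact ⟨(hE α₀).2 ⟨hα₀, nchainLinked_iff_reflTransGen.2 ⟨hα₀, .refl⟩⟩, .refl _⟩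
  | @tail x y hx hxy ih =>
    obtain ⟨hxE, hreach⟩ := ih
    have hyE : y ∈ E := (hE y).2 ⟨hxy.1, nchainLinked_iff_reflTransGen.2 ⟨hα₀, hx.tail hxy⟩⟩
    refine ⟨hyE, ?_⟩
    by_cases hne : x = y
    · exact hne ▸ hreach
    · exact hreach.trans (linkGraph_adj.2 ⟨hne, hxE, hyE, hxy.2⟩).reachable

theorem no_odd_loop_partition_general
    (d n N : ℕ) (ρ : ℝ) (hρ : 0 < ρ) (ω : Fin d → ℝ)
    (Γ : Finset ℂ) (hcard : Γ.card ≤ n)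
    (α₀ : ℂ)
    (E : Finset ℂ)
    (hE : ∀ β, β ∈ E ↔ β ∈ Γ ∧ NChainLinked ω N ρ Γ α₀ β)
    (hnoloop : ¬ ∃ c : List ℂ, NChainIn ω N ρ E c ∧ c.head? = c.getLast? ∧
      2 ≤ c.length ∧ Odd (c.length - 1)) :
    ∃ S₁ S₂ : Finset ℂ, S₁ ∪ S₂ = E ∧ Disjoint S₁ S₂ ∧
      (∀ β ∈ S₁, ∀ γ ∈ S₁, ¬ NLinked ω N ρ β γ) ∧
      (∀ β ∈ S₂, ∀ γ ∈ S₂, ¬ NLinked ω N ρ β γ) ∧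
      (∀ β ∈ S₁, ∀ γ ∈ S₁, NLinked ω (n * N) (n * ρ) β ((starRingEnd ℂ) γ)) ∧
      (∀ β ∈ S₂, ∀ γ ∈ S₂, NLinked ω (n * N) (n * ρ) β ((starRingEnd ℂ) γ)) ∧
      (∀ β ∈ S₁, ∀ γ ∈ S₂, NLinked ω (n * N) (n * ρ) β γ) := by
  obtain ⟨c⟩ := linkGraph.nonempty_coloring_bool hnoloop
  have hn : E.card ≤ n := (Finset.card_le_card fun β hβ => ((hE β).1 hβ).1).trans hcard
  have hreach (β γ : ℂ) (hβ : β ∈ E) (hγ : γ ∈ E) : (linkGraph ω N ρ E).Reachable β γ :=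
    (reachable_of_mem_chainClass hE hβ).symm.trans (reachable_of_mem_chainClass hE hγ)
  refine ⟨{β ∈ E | c β}, {β ∈ E | ¬ c β}, Finset.filter_union_filter_not_eq _ _,
    Finset.disjoint_filter_filter_not _ _ _, ?_, ?_, ?_, ?_, ?_⟩ <;>
    simp only [Finset.mem_filter] <;> rintro β ⟨hβ, hcβ⟩ γ ⟨hγ, hcγ⟩
  · exact linkGraph.not_nlinked_of_color_eq c hnoloop hβ hγ (by simp_all)
  · exact linkGraph.not_nlinked_of_color_eq c hnoloop hβ hγ (by simp_all)
  · exact linkGraph.nlinked_conj_of_color_eq c hρ hβ hn (hreach β γ hβ hγ) (by simp_all)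
  · exact linkGraph.nlinked_conj_of_color_eq c hρ hβ hn (hreach β γ hβ hγ) (by simp_all)
  · exact linkGraph.nlinked_of_color_ne c hρ hβ hn (hreach β γ hβ hγ) (by simp_all)

/-- If the chain-linked equivalence class `E` contains no odd `(N,ρ)`-loop,
then `E` splits into `S₁ ∪ S₂` with: no two elements of the same part `(N,ρ)`-linked;
any two elements of the same part `(nN,nρ)`-linked after conjugating one of them; and any
element of `S₁` `(nN,nρ)`-linked to any element of `S₂`. -/
theorem no_odd_loop_partition
    (d n N : ℕ) (ρ : ℝ) (hρ : 0 < ρ) (ω : Fin d → ℝ)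
    (Γ : Finset ℂ) (hcard : Γ.card ≤ n)
    (hstar : ∀ α ∈ Γ, ∃ β ∈ Γ, NLinked ω N ρ α β)
    (α₀ : ℂ) (hα₀ : α₀ ∈ Γ)
    (E : Finset ℂ)
    (hE : ∀ β, β ∈ E ↔ β ∈ Γ ∧ NChainLinked ω N ρ Γ α₀ β)
    (hnoloop : ¬ ∃ c : List ℂ, NChainIn ω N ρ E c ∧ c.head? = c.getLast? ∧
      2 ≤ c.length ∧ Odd (c.length - 1)) :
    ∃ S₁ S₂ : Finset ℂ, S₁ ∪ S₂ = E ∧ Disjoint S₁ S₂ ∧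
      (∀ β ∈ S₁, ∀ γ ∈ S₁, ¬ NLinked ω N ρ β γ) ∧
      (∀ β ∈ S₂, ∀ γ ∈ S₂, ¬ NLinked ω N ρ β γ) ∧
      (∀ β ∈ S₁, ∀ γ ∈ S₁, NLinked ω (n * N) (n * ρ) β ((starRingEnd ℂ) γ)) ∧
      (∀ β ∈ S₂, ∀ γ ∈ S₂, NLinked ω (n * N) (n * ρ) β ((starRingEnd ℂ) γ)) ∧
      (∀ β ∈ S₁, ∀ γ ∈ S₂, NLinked ω (n * N) (n * ρ) β γ) :=
  no_odd_loop_partition_general d n N ρ hρ ω Γ hcard α₀ E hE hnoloop
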